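/- Let U ⊆ ℂ² be open and ρ : U → ℝ smooth with Levi matrix H(ρ)(z) positive definite at every z ∈ U; let Z be the complex gradient of ρ, L the (1,0) vector field with components L¹ = ∂ρ/∂z₂, L² = −∂ρ/∂z₁, and D(z) := det H(ρ)(z). Then for every C² function f : U → ℂ and every z ∈ U one has the commutator identity L(L̄f)(z) − L̄(Lf)(z) = D(z)·(Zf(z) − Z̄f(z)); i.e. [L, L̄] = D·(Z − Z̄). -/

import Mathlib

open Complex Matrix
open scoped ComplexOrder

/-- The Wirtinger derivative `∂f/∂z_μ` of an `ℝ`-differentiable function `f : ℂⁿ → ℂ`. -/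
noncomputable def wD {n : ℕ} (f : (Fin n → ℂ) → ℂ) (z : Fin n → ℂ) (μ : Fin n) : ℂ :=
  (1 / 2 : ℂ) *
    (fderiv ℝ f z (Pi.single μ 1) - Complex.I * fderiv ℝ f z (Pi.single μ Complex.I))

/-- The conjugate Wirtinger derivative `∂f/∂z̄_μ`. -/
noncomputable def wDbar {n : ℕ} (f : (Fin n → ℂ) → ℂ) (z : Fin n → ℂ) (μ : Fin n) : ℂ :=
  (1 / 2 : ℂ) *
    (fderiv ℝ f z (Pi.single μ 1) + Complex.I * fderiv ℝ f z (Pi.single μ Complex.I))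

/-- The Levi matrix `ρ_{μν̄} = ∂²ρ/∂z_μ∂z̄_ν` of a real-valued function `ρ : ℂⁿ → ℝ`. -/
noncomputable def levi {n : ℕ} (ρ : (Fin n → ℂ) → ℝ) (z : Fin n → ℂ) :
    Matrix (Fin n) (Fin n) ℂ :=
  Matrix.of fun μ ν => wD (fun w => wDbar (fun w' => (ρ w' : ℂ)) w ν) z μ

/-- The tangential `(1,0)` vector field `L` with components `L¹ = ∂ρ/∂z₂`,
`L² = −∂ρ/∂z₁`. -/
noncomputable def Lfield (ρ : (Fin 2 → ℂ) → ℝ) (z : Fin 2 → ℂ) : Fin 2 → ℂ :=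
  ![wD (fun w => (ρ w : ℂ)) z 1, -(wD (fun w => (ρ w : ℂ)) z 0)]

/-- Action of a `(1,0)` vector field `W`: `Wf = Σ_μ W^μ ∂f/∂z_μ`. -/
noncomputable def op10 {n : ℕ} (W : (Fin n → ℂ) → Fin n → ℂ) (f : (Fin n → ℂ) → ℂ)
    (z : Fin n → ℂ) : ℂ :=
  ∑ μ : Fin n, W z μ * wD f z μ

/-- Action of the conjugate field `W̄`: `W̄f = Σ_μ conj(W^μ) ∂f/∂z̄_μ`. -/
noncomputable def op01 {n : ℕ} (W : (Fin n → ℂ) → Fin n → ℂ) (f : (Fin n → ℂ) → ℂ)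
    (z : Fin n → ℂ) : ℂ :=
  ∑ μ : Fin n, (starRingEnd ℂ) (W z μ) * wDbar f z μ

variable {n : ℕ} {f g : (Fin n → ℂ) → ℂ} {z : Fin n → ℂ}

lemma wD_mul (hf : DifferentiableAt ℝ f z) (hg : DifferentiableAt ℝ g z) (μ : Fin n) :
    wD (fun w => f w * g w) z μ = f z * wD g z μ + g z * wD f z μ := by
  have H : HasFDerivAt (fun w => f w * g w) (f z • fderiv ℝ g z + g z • fderiv ℝ f z) z :=
    hf.hasFDerivAt.mul hg.hasFDerivAt
  simp only [wD, H.fderiv, ContinuousLinearMap.add_apply, ContinuousLinearMap.smul_apply,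
    smul_eq_mul]
  ring

lemma wDbar_mul (hf : DifferentiableAt ℝ f z) (hg : DifferentiableAt ℝ g z) (μ : Fin n) :
    wDbar (fun w => f w * g w) z μ = f z * wDbar g z μ + g z * wDbar f z μ := by
  have H : HasFDerivAt (fun w => f w * g w) (f z • fderiv ℝ g z + g z • fderiv ℝ f z) z :=
    hf.hasFDerivAt.mul hg.hasFDerivAt
  simp only [wDbar, H.fderiv, ContinuousLinearMap.add_apply, ContinuousLinearMap.smul_apply,
    smul_eq_mul]
  ring

lemma wD_sub (hf : DifferentiableAt ℝ f z) (hg : DifferentiableAt ℝ g z) (μ : Fin n) :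
    wD (fun w => f w - g w) z μ = wD f z μ - wD g z μ := by
  have H : HasFDerivAt (fun w => f w - g w) (fderiv ℝ f z - fderiv ℝ g z) z :=
    hf.hasFDerivAt.sub hg.hasFDerivAt
  simp only [wD, H.fderiv, ContinuousLinearMap.sub_apply]
  ring

lemma wDbar_sub (hf : DifferentiableAt ℝ f z) (hg : DifferentiableAt ℝ g z) (μ : Fin n) :
    wDbar (fun w => f w - g w) z μ = wDbar f z μ - wDbar g z μ := by
  have H : HasFDerivAt (fun w => f w - g w) (fderiv ℝ f z - fderiv ℝ g z) z :=
    hf.hasFDerivAt.sub hg.hasFDerivAt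
  simp only [wDbar, H.fderiv, ContinuousLinearMap.sub_apply]
  ring

lemma hasFDerivAt_conj (hf : DifferentiableAt ℝ f z) :
    HasFDerivAt (fun w => (starRingEnd ℂ) (f w))
      ((Complex.conjCLE.toContinuousLinearMap).comp (fderiv ℝ f z)) z := by
  have := Complex.conjCLE.toContinuousLinearMap.hasFDerivAt.comp z hf.hasFDerivAt
  exact this

lemma wDbar_conj (hf : DifferentiableAt ℝ f z) (μ : Fin n) :
    wDbar (fun w => (starRingEnd ℂ) (f w)) z μ = (starRingEnd ℂ) (wD f z μ) := by
  simp only [wDbar, wD, (hasFDerivAt_conj hf).fderiv, ContinuousLinearMap.comp_apply,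
    ContinuousLinearEquiv.coe_coe, Complex.conjCLE_apply, _root_.map_mul, _root_.map_sub,
    _root_.map_add, map_div₀, _root_.map_one, _root_.map_ofNat, Complex.conj_I]
  ring

lemma wD_conj (hf : DifferentiableAt ℝ f z) (μ : Fin n) :
    wD (fun w => (starRingEnd ℂ) (f w)) z μ = (starRingEnd ℂ) (wDbar f z μ) := by
  simp only [wDbar, wD, (hasFDerivAt_conj hf).fderiv, ContinuousLinearMap.comp_apply,
    ContinuousLinearEquiv.coe_coe, Complex.conjCLE_apply, _root_.map_mul, _root_.map_sub,
    _root_.map_add, map_div₀, _root_.map_one, _root_.map_ofNat, Complex.conj_I]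
  ring

/-- For a real-valued function, `conj (∂ρ/∂z̄_μ) = ∂ρ/∂z_μ`, unconditionally. -/
lemma conj_wDbar_ofReal (ρ : (Fin n → ℂ) → ℝ) (w : Fin n → ℂ) (ν : Fin n) :
    (starRingEnd ℂ) (wDbar (fun w' => (ρ w' : ℂ)) w ν) = wD (fun w' => (ρ w' : ℂ)) w ν := by
  by_cases h : DifferentiableAt ℝ (fun w' => ((ρ w' : ℂ))) w
  · rw [← wD_conj h ν]
    congr 1
    funext w'
    simp [Complex.conj_ofReal]
  · rw [wD, wDbar, fderiv_zero_of_not_differentiableAt h]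
    simp

lemma conj_wD_ofReal (ρ : (Fin n → ℂ) → ℝ) (w : Fin n → ℂ) (ν : Fin n) :
    (starRingEnd ℂ) (wD (fun w' => (ρ w' : ℂ)) w ν) = wDbar (fun w' => (ρ w' : ℂ)) w ν := by
  rw [← conj_wDbar_ofReal ρ w ν]
  exact Complex.conj_conj _

lemma hasFDerivAt_wDbar (hf : ContDiffAt ℝ 2 f z) (b : Fin n) :
    HasFDerivAt (fun w => wDbar f w b)
      ((1/2 : ℂ) • ((fderiv ℝ (fderiv ℝ f) z).flip (Pi.single b 1)
        + Complex.I • (fderiv ℝ (fderiv ℝ f) z).flip (Pi.single b Complex.I))) z := by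
  have hd : DifferentiableAt ℝ (fderiv ℝ f) z :=
    (hf.fderiv_right (m := 1) (by norm_num)).differentiableAt one_ne_zero
  have h1 : HasFDerivAt (fun w => fderiv ℝ f w (Pi.single b 1))
      ((fderiv ℝ (fderiv ℝ f) z).flip (Pi.single b 1)) z := by
    have := hd.hasFDerivAt.clm_apply (hasFDerivAt_const (Pi.single b (1:ℂ)) z)
    simpa using this
  have h2 : HasFDerivAt (fun w => fderiv ℝ f w (Pi.single b Complex.I))
      ((fderiv ℝ (fderiv ℝ f) z).flip (Pi.single b Complex.I)) z := by
    have := hd.hasFDerivAt.clm_apply (hasFDerivAt_const (Pi.single b (Complex.I)) z)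
    simpa using this
  have := ((h1.fun_add (h2.const_mul Complex.I)).const_mul (1/2 : ℂ))
  simpa only [wDbar, smul_smul] using this

lemma hasFDerivAt_wD (hf : ContDiffAt ℝ 2 f z) (b : Fin n) :
    HasFDerivAt (fun w => wD f w b)
      ((1/2 : ℂ) • ((fderiv ℝ (fderiv ℝ f) z).flip (Pi.single b 1)
        - Complex.I • (fderiv ℝ (fderiv ℝ f) z).flip (Pi.single b Complex.I))) z := by
  have hd : DifferentiableAt ℝ (fderiv ℝ f) z :=
    (hf.fderiv_right (m := 1) (by norm_num)).differentiableAt one_ne_zero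
  have h1 : HasFDerivAt (fun w => fderiv ℝ f w (Pi.single b 1))
      ((fderiv ℝ (fderiv ℝ f) z).flip (Pi.single b 1)) z := by
    have := hd.hasFDerivAt.clm_apply (hasFDerivAt_const (Pi.single b (1:ℂ)) z)
    simpa using this
  have h2 : HasFDerivAt (fun w => fderiv ℝ f w (Pi.single b Complex.I))
      ((fderiv ℝ (fderiv ℝ f) z).flip (Pi.single b Complex.I)) z := by
    have := hd.hasFDerivAt.clm_apply (hasFDerivAt_const (Pi.single b (Complex.I)) z)
    simpa using this
  have := ((h1.fun_sub (h2.const_mul Complex.I)).const_mul (1/2 : ℂ))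
  simpa only [wD, smul_sub, smul_smul] using this

lemma wD_wDbar_comm (hf : ContDiffAt ℝ 2 f z) (a b : Fin n) :
    wD (fun w => wDbar f w b) z a = wDbar (fun w => wD f w a) z b := by
  have hsymm := hf.isSymmSndFDerivAt (by simp)
  have hb := (hasFDerivAt_wDbar hf b).fderiv
  have ha := (hasFDerivAt_wD hf a).fderiv
  rw [wD, hb, wDbar, ha]
  simp only [ContinuousLinearMap.smul_apply, ContinuousLinearMap.add_apply,
    ContinuousLinearMap.sub_apply, ContinuousLinearMap.flip_apply, smul_eq_mul]
  rw [hsymm (Pi.single b 1) (Pi.single a 1), hsymm (Pi.single b 1) (Pi.single a Complex.I),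
    hsymm (Pi.single b Complex.I) (Pi.single a 1),
    hsymm (Pi.single b Complex.I) (Pi.single a Complex.I)]
  ring

/-- The bracket identity `[L, L̄] = D·(Z − Z̄)` where `D = det H(ρ)` and `Z` is the
complex gradient of `ρ`. -/
theorem bracket_L_Lbar (U : Set (Fin 2 → ℂ)) (hU : IsOpen U)
    (ρ : (Fin 2 → ℂ) → ℝ) (hρ : ContDiffOn ℝ (⊤ : ℕ∞) ρ U)
    (hPD : ∀ z ∈ U, (levi ρ z).PosDef)
    (Z : (Fin 2 → ℂ) → Fin 2 → ℂ)
    (hZ : ∀ z ∈ U, ∀ ν : Fin 2,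
      ∑ μ : Fin 2, Z z μ * levi ρ z μ ν = wDbar (fun w => (ρ w : ℂ)) z ν) :
    ∀ f : (Fin 2 → ℂ) → ℂ, ContDiffOn ℝ 2 f U → ∀ z ∈ U,
      op10 (Lfield ρ) (op01 (Lfield ρ) f) z - op01 (Lfield ρ) (op10 (Lfield ρ) f) z =
        (levi ρ z).det * (op10 Z f z - op01 Z f z) := by
  intro f hf z hz
  have hρC : ContDiffOn ℝ 2 (fun w => ((ρ w : ℝ) : ℂ)) U := by
    have h : ContDiffOn ℝ 2 (⇑Complex.ofRealCLM ∘ ρ) U :=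
      Complex.ofRealCLM.contDiff.comp_contDiffOn (hρ.of_le (WithTop.coe_le_coe.mpr le_top))
    exact h.congr (fun w _ => by simp)
  have hρ2 : ContDiffAt ℝ 2 (fun w => ((ρ w : ℝ) : ℂ)) z := hρC.contDiffAt (hU.mem_nhds hz)
  have hf2 : ContDiffAt ℝ 2 f z := hf.contDiffAt (hU.mem_nhds hz)
  have dρb : ∀ ν : Fin 2, DifferentiableAt ℝ (fun w => wDbar (fun w' => ((ρ w' : ℝ) : ℂ)) w ν) z :=
    fun ν => (hasFDerivAt_wDbar hρ2 ν).differentiableAt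
  have dρd : ∀ ν : Fin 2, DifferentiableAt ℝ (fun w => wD (fun w' => ((ρ w' : ℝ) : ℂ)) w ν) z :=
    fun ν => (hasFDerivAt_wD hρ2 ν).differentiableAt
  have dfb : ∀ ν : Fin 2, DifferentiableAt ℝ (fun w => wDbar f w ν) z :=
    fun ν => (hasFDerivAt_wDbar hf2 ν).differentiableAt
  have dfd : ∀ ν : Fin 2, DifferentiableAt ℝ (fun w => wD f w ν) z :=
    fun ν => (hasFDerivAt_wD hf2 ν).differentiableAt
  have e1 : op01 (Lfield ρ) f = fun w =>
      wDbar (fun w' => ((ρ w' : ℝ) : ℂ)) w 1 * wDbar f w 0 - wDbar (fun w' => ((ρ w' : ℝ) : ℂ)) w 0 * wDbar f w 1 := by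
    funext w
    simp only [op01, Fin.sum_univ_two, Lfield, Matrix.cons_val_zero, Matrix.cons_val_one,
      Matrix.head_cons, _root_.map_neg, conj_wD_ofReal]
    ring
  have e2 : op10 (Lfield ρ) f = fun w =>
      wD (fun w' => ((ρ w' : ℝ) : ℂ)) w 1 * wD f w 0 - wD (fun w' => ((ρ w' : ℝ) : ℂ)) w 0 * wD f w 1 := by
    funext w
    simp only [op10, Fin.sum_univ_two, Lfield, Matrix.cons_val_zero, Matrix.cons_val_one,
      Matrix.head_cons]
    ring
  have key1 : ∀ μ : Fin 2,
      wD (fun w => wDbar (fun w' => ((ρ w' : ℝ) : ℂ)) w 1 * wDbar f w 0 - wDbar (fun w' => ((ρ w' : ℝ) : ℂ)) w 0 * wDbar f w 1) z μ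
      = (wDbar (fun w' => ((ρ w' : ℝ) : ℂ)) z 1 * wD (fun w => wDbar f w 0) z μ + wDbar f z 0 * levi ρ z μ 1)
        - (wDbar (fun w' => ((ρ w' : ℝ) : ℂ)) z 0 * wD (fun w => wDbar f w 1) z μ + wDbar f z 1 * levi ρ z μ 0) := by
    intro μ
    rw [wD_sub ((dρb 1).fun_mul (dfb 0)) ((dρb 0).fun_mul (dfb 1)) μ,
      wD_mul (dρb 1) (dfb 0) μ, wD_mul (dρb 0) (dfb 1) μ]
    simp only [levi, Matrix.of_apply]
  have key2 : ∀ ν : Fin 2,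
      wDbar (fun w => wD (fun w' => ((ρ w' : ℝ) : ℂ)) w 1 * wD f w 0 - wD (fun w' => ((ρ w' : ℝ) : ℂ)) w 0 * wD f w 1) z ν
      = (wD (fun w' => ((ρ w' : ℝ) : ℂ)) z 1 * wD (fun w => wDbar f w ν) z 0 + wD f z 0 * levi ρ z 1 ν)
        - (wD (fun w' => ((ρ w' : ℝ) : ℂ)) z 0 * wD (fun w => wDbar f w ν) z 1 + wD f z 1 * levi ρ z 0 ν) := by
    intro ν
    rw [wDbar_sub ((dρd 1).fun_mul (dfd 0)) ((dρd 0).fun_mul (dfd 1)) ν,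
      wDbar_mul (dρd 1) (dfd 0) ν, wDbar_mul (dρd 0) (dfd 1) ν,
      ← wD_wDbar_comm hf2 0 ν, ← wD_wDbar_comm hf2 1 ν,
      ← wD_wDbar_comm hρ2 1 ν, ← wD_wDbar_comm hρ2 0 ν]
    simp only [levi, Matrix.of_apply]
  have hconjlevi : ∀ μ ν : Fin 2, (starRingEnd ℂ) (levi ρ z μ ν) = levi ρ z ν μ := by
    intro μ ν
    simp only [levi, Matrix.of_apply]
    rw [← wDbar_conj (dρb ν) μ]
    have hfun : (fun w => (starRingEnd ℂ) (wDbar (fun w' => ((ρ w' : ℝ) : ℂ)) w ν)) = fun w => wD (fun w' => ((ρ w' : ℝ) : ℂ)) w ν := by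
      funext w; exact conj_wDbar_ofReal ρ w ν
    rw [hfun, ← wD_wDbar_comm hρ2 ν μ]
  have hE : ∀ ν : Fin 2,
      Z z 0 * levi ρ z 0 ν + Z z 1 * levi ρ z 1 ν = wDbar (fun w' => ((ρ w' : ℝ) : ℂ)) z ν := by
    intro ν
    simpa [Fin.sum_univ_two] using hZ z hz ν
  have hC : ∀ ν : Fin 2,
      (starRingEnd ℂ) (Z z 0) * levi ρ z ν 0 + (starRingEnd ℂ) (Z z 1) * levi ρ z ν 1
        = wD (fun w' => ((ρ w' : ℝ) : ℂ)) z ν := by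
    intro ν
    have h := congrArg (starRingEnd ℂ) (hE ν)
    simpa only [_root_.map_add, _root_.map_mul, hconjlevi, conj_wDbar_ofReal] using h
  rw [e1, e2]
  simp only [op10, op01, Fin.sum_univ_two, key1, key2, Lfield, Matrix.cons_val_zero,
    Matrix.cons_val_one, Matrix.head_cons, _root_.map_neg, conj_wD_ofReal,
    Matrix.det_fin_two]
  linear_combination
    (-(levi ρ z 1 1 * wD f z 0 - levi ρ z 0 1 * wD f z 1)) * hE 0
    + (-(levi ρ z 0 0 * wD f z 1 - levi ρ z 1 0 * wD f z 0)) * hE 1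
    + (levi ρ z 1 1 * wDbar f z 0 - levi ρ z 1 0 * wDbar f z 1) * hC 0
    + (levi ρ z 0 0 * wDbar f z 1 - levi ρ z 0 1 * wDbar f z 0) * hC 1
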